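/- arXiv:1912.11176 — 2 statements merged into one kernel-verified Lean document; each statement's English description precedes it below -/
import Mathlib

section
/- Let a ∈ ℝ^n and b ∈ ℝ^m have nonnegative entries with ∑_{i=1}^{n} a_i = 1 and ∑_{j=1}^{m} b_j = 1, let M ∈ ℝ^{n×m} be a cost matrix, and let γ > 0. Then the entropic optimal transport problem attains its minimum: there exists P* ∈ U(a,b) such that f_γ(P*) ≤ f_γ(Q) for all Q ∈ U(a,b), where f_γ(P) = ∑_{i,j} P_{ij} M_{ij} + γ ∑_{i,j} P_{ij}(log P_{ij} − 1). -/
open Matrix BigOperators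

/-- The transport polytope `U(a,b)`: matrices with nonnegative entries, row sums `a`,
and column sums `b`. -/
def transportPolytope {n m : ℕ} (a : Fin n → ℝ) (b : Fin m → ℝ) :
    Set (Matrix (Fin n) (Fin m) ℝ) :=
  {P | (∀ i j, 0 ≤ P i j) ∧ (∀ i, ∑ j, P i j = a i) ∧ (∀ j, ∑ i, P i j = b j)}

/-- The entropically regularized transport objective
`f_γ(P) = ∑_{i,j} P_{ij} M_{ij} + γ ∑_{i,j} P_{ij} (log P_{ij} − 1)`.
(Since `Real.log 0 = 0`, a term with `P i j = 0` contributes `0`.) -/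
noncomputable def entropicObjective {n m : ℕ} (M : Matrix (Fin n) (Fin m) ℝ) (γ : ℝ)
    (P : Matrix (Fin n) (Fin m) ℝ) : ℝ :=
  (∑ i, ∑ j, P i j * M i j) + γ * ∑ i, ∑ j, P i j * (Real.log (P i j) - 1)

/-!
`U(a,b)` is closed, and bounded because each entry `P i j` lies in `[0, a i]`, so it is
compact; it contains the independent coupling `a bᵀ`. Since `x log x → 0` as `x → 0`, `f_γ`
is continuous, hence attains its minimum on `U(a,b)`.
-/

theorem Real.continuous_mul_log_sub_one : Continuous fun x : ℝ => x * (Real.log x - 1) := by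
  refine (Real.continuous_mul_log.sub continuous_id).congr fun x => ?_
  simp only [Pi.sub_apply, id, mul_sub, mul_one]

section
variable {n m : ℕ}

theorem continuous_entropicObjective (M : Matrix (Fin n) (Fin m) ℝ) (γ : ℝ) :
    Continuous (entropicObjective M γ) := by
  unfold entropicObjective
  refine .add (by fun_prop) (continuous_const.mul <| continuous_finsetSum _ fun i _ =>
    continuous_finsetSum _ fun j _ => Real.continuous_mul_log_sub_one.comp ?_)
  fun_prop

theorem isClosed_transportPolytope (a : Fin n → ℝ) (b : Fin m → ℝ) :
    IsClosed (transportPolytope a b) := by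
  simp only [transportPolytope, Set.ofPred_and, Set.ofPred_forall]
  refine .inter (isClosed_iInter fun i => isClosed_iInter fun j => isClosed_le ?_ ?_)
    (.inter (isClosed_iInter fun i => isClosed_eq ?_ ?_)
      (isClosed_iInter fun j => isClosed_eq ?_ ?_)) <;>
    fun_prop

theorem transportPolytope_subset_pi_Icc (a : Fin n → ℝ) (b : Fin m → ℝ) :
    transportPolytope a b ⊆ Set.univ.pi fun i => Set.univ.pi fun _ => Set.Icc 0 (a i) := by
  rintro P ⟨hP, hrow, -⟩ i - j -
  exact ⟨hP i j, hrow i ▸ Finset.single_le_sum (fun j' _ => hP i j') (Finset.mem_univ j)⟩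

theorem isCompact_transportPolytope (a : Fin n → ℝ) (b : Fin m → ℝ) :
    IsCompact (transportPolytope a b) :=
  (isCompact_univ_pi fun _ => isCompact_univ_pi fun _ => isCompact_Icc).of_isClosed_subset
    (isClosed_transportPolytope a b) (transportPolytope_subset_pi_Icc a b)

theorem vecMulVec_mem_transportPolytope {a : Fin n → ℝ} {b : Fin m → ℝ}
    (ha : ∀ i, 0 ≤ a i) (hb : ∀ j, 0 ≤ b j) (ha1 : ∑ i, a i = 1) (hb1 : ∑ j, b j = 1) :
    vecMulVec a b ∈ transportPolytope a b := by
  refine ⟨fun i j => mul_nonneg (ha i) (hb j), fun i => ?_, fun j => ?_⟩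
  · simp only [vecMulVec_apply, ← Finset.mul_sum, hb1, mul_one]
  · simp only [vecMulVec_apply, ← Finset.sum_mul, ha1, one_mul]
end

theorem stmt_8_general {n m : ℕ} (a : Fin n → ℝ) (b : Fin m → ℝ)
    (ha : ∀ i, 0 ≤ a i) (hb : ∀ j, 0 ≤ b j)
    (ha1 : ∑ i, a i = 1) (hb1 : ∑ j, b j = 1)
    (M : Matrix (Fin n) (Fin m) ℝ) (γ : ℝ) :
    ∃ P ∈ transportPolytope a b, ∀ Q ∈ transportPolytope a b,
      entropicObjective M γ P ≤ entropicObjective M γ Q :=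
  (isCompact_transportPolytope a b).exists_isMinOn
    ⟨_, vecMulVec_mem_transportPolytope ha hb ha1 hb1⟩
    (continuous_entropicObjective M γ).continuousOn

/-- For probability vectors `a`, `b`, any cost matrix `M`, and `γ > 0`,
the entropic optimal transport problem attains its minimum over `U(a,b)`. -/
theorem stmt_8 {n m : ℕ} (a : Fin n → ℝ) (b : Fin m → ℝ)
    (ha : ∀ i, 0 ≤ a i) (hb : ∀ j, 0 ≤ b j)
    (ha1 : ∑ i, a i = 1) (hb1 : ∑ j, b j = 1)
    (M : Matrix (Fin n) (Fin m) ℝ) (γ : ℝ) (hγ : 0 < γ) :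
    ∃ P ∈ transportPolytope a b, ∀ Q ∈ transportPolytope a b,
      entropicObjective M γ P ≤ entropicObjective M γ Q :=
  stmt_8_general a b ha hb ha1 hb1 M γ
end

section
/- Let a ∈ ℝ^n, b ∈ ℝ^m, M ∈ ℝ^{n×m}, and γ > 0. The minimizer of the entropically regularized transport objective over U(a,b) is unique: if P, Q ∈ U(a,b) both satisfy f_γ(P) ≤ f_γ(R) and f_γ(Q) ≤ f_γ(R) for all R ∈ U(a,b), then P = Q. -/
open Matrix BigOperators

/-!
`f_γ` is a sum over the entries of `x ↦ x M_{ij} + γ x (log x − 1)`, each strictly convex on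
`[0, ∞)` because `γ > 0`. Hence `f_γ` is strictly convex on the convex set `U(a,b)`, and a
strictly convex function has at most one minimiser: the midpoint of two distinct minimisers
would do strictly better.
-/

theorem StrictConvexOn.smul {𝕜 E β : Type*} [Field 𝕜] [LinearOrder 𝕜] [IsStrictOrderedRing 𝕜]
    [AddCommMonoid E] [SMul 𝕜 E] [AddCommMonoid β] [PartialOrder β] [Module 𝕜 β]
    [PosSMulStrictMono 𝕜 β] {s : Set E} {f : E → β} {c : 𝕜} (hc : 0 < c)
    (hf : StrictConvexOn 𝕜 s f) : StrictConvexOn 𝕜 s fun x => c • f x := by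
  refine ⟨hf.1, fun x hx y hy hxy a b ha hb hab => ?_⟩
  calc c • f (a • x + b • y) < c • (a • f x + b • f y) :=
        smul_lt_smul_of_pos_left (hf.2 hx hy hxy ha hb hab) hc
    _ = a • c • f x + b • c • f y := by simp only [smul_add, smul_comm c]

theorem strictConvexOn_univ_pi_sum {𝕜 ι β : Type*} {E : ι → Type*} [Field 𝕜] [LinearOrder 𝕜]
    [IsStrictOrderedRing 𝕜] [Fintype ι] [∀ i, AddCommGroup (E i)] [∀ i, Module 𝕜 (E i)]
    [AddCommMonoid β] [PartialOrder β] [IsOrderedCancelAddMonoid β] [Module 𝕜 β]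
    {s : ∀ i, Set (E i)} {f : ∀ i, E i → β} (hf : ∀ i, StrictConvexOn 𝕜 (s i) (f i)) :
    StrictConvexOn 𝕜 (Set.univ.pi s) fun x => ∑ i, f i (x i) := by
  refine ⟨convex_pi fun i _ => (hf i).1, fun x hx y hy hxy a b ha hb hab => ?_⟩
  obtain ⟨k, hk⟩ := Function.ne_iff.1 hxy
  rw [Set.mem_univ_pi] at hx hy
  calc ∑ i, f i ((a • x + b • y) i) < ∑ i, (a • f i (x i) + b • f i (y i)) :=
        Finset.sum_lt_sum (fun i _ => (hf i).convexOn.2 (hx i) (hy i) ha.le hb.le hab)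
          ⟨k, Finset.mem_univ k, (hf k).2 (hx k) (hy k) hk ha hb hab⟩
    _ = a • ∑ i, f i (x i) + b • ∑ i, f i (y i) := by
        rw [Finset.sum_add_distrib, Finset.smul_sum, Finset.smul_sum]

theorem Real.strictConvexOn_mul_log_sub_one :
    StrictConvexOn ℝ (Set.Ici 0) fun x : ℝ => x * (Real.log x - 1) :=
  (Real.strictConvexOn_mul_log.sub_concaveOn (concaveOn_id (convex_Ici 0))).congr fun x _ => by
    simp only [Pi.sub_apply, id_eq]
    ring

theorem convex_transportPolytope {n m : ℕ} (a : Fin n → ℝ) (b : Fin m → ℝ) :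
    Convex ℝ (transportPolytope a b) := by
  rintro P ⟨hP₀, hProw, hPcol⟩ Q ⟨hQ₀, hQrow, hQcol⟩ s t hs ht hst
  refine ⟨fun i j => ?_, fun i => ?_, fun j => ?_⟩
  · simp only [Matrix.add_apply, Matrix.smul_apply, smul_eq_mul]
    exact add_nonneg (mul_nonneg hs (hP₀ i j)) (mul_nonneg ht (hQ₀ i j))
  · simp [Finset.sum_add_distrib, ← Finset.mul_sum, hProw, hQrow, ← add_mul, hst]
  · simp [Finset.sum_add_distrib, ← Finset.mul_sum, hPcol, hQcol, ← add_mul, hst]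

theorem transportPolytope_subset_nonneg {n m : ℕ} (a : Fin n → ℝ) (b : Fin m → ℝ) :
    transportPolytope a b ⊆ Set.univ.pi fun _ => Set.univ.pi fun _ => Set.Ici 0 :=
  fun _ hP i _ j _ => hP.1 i j

theorem strictConvexOn_entropicObjective {n m : ℕ} (M : Matrix (Fin n) (Fin m) ℝ) {γ : ℝ}
    (hγ : 0 < γ) :
    StrictConvexOn ℝ (Set.univ.pi fun _ => Set.univ.pi fun _ => Set.Ici 0)
      (entropicObjective M γ) := by
  have hentry (i : Fin n) (j : Fin m) : StrictConvexOn ℝ (Set.Ici 0)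
      fun x : ℝ => γ * (x * (Real.log x - 1)) + x * M i j :=
    (Real.strictConvexOn_mul_log_sub_one.smul hγ).add_convexOn
      ((LinearMap.mulRight ℝ (M i j)).convexOn (convex_Ici 0))
  have hsum : entropicObjective M γ =
      fun P => ∑ i, ∑ j, (γ * (P i j * (Real.log (P i j) - 1)) + P i j * M i j) := by
    ext P
    simp only [entropicObjective, Finset.mul_sum, Finset.sum_add_distrib, add_comm]
  rw [hsum]
  exact strictConvexOn_univ_pi_sum fun i => strictConvexOn_univ_pi_sum (hentry i)

/-- The minimizer of the entropically regularized transport objective over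
`U(a,b)` is unique: any two minimizers coincide. -/
theorem stmt_9 {n m : ℕ} (a : Fin n → ℝ) (b : Fin m → ℝ)
    (M : Matrix (Fin n) (Fin m) ℝ) (γ : ℝ) (hγ : 0 < γ)
    (P Q : Matrix (Fin n) (Fin m) ℝ)
    (hP : P ∈ transportPolytope a b) (hQ : Q ∈ transportPolytope a b)
    (hPmin : ∀ R ∈ transportPolytope a b, entropicObjective M γ P ≤ entropicObjective M γ R)
    (hQmin : ∀ R ∈ transportPolytope a b, entropicObjective M γ Q ≤ entropicObjective M γ R) :
    P = Q :=
  ((strictConvexOn_entropicObjective M hγ).subset (transportPolytope_subset_nonneg a b)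
    (convex_transportPolytope a b)).eq_of_isMinOn hPmin hQmin hP hQ
end
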